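/- Let p be a prime, let S ⊆ ℤ/pℤ be a nonempty subset with |S| ≤ p/2, and let a ∈ ℤ/pℤ be nonzero. Then |Ŝ(a)| ≤ sin(π|S|/p) / sin(π/p), where Ŝ denotes the Fourier transform of the indicator function of S; equality is attained when S is an arithmetic progression of common difference a⁻¹ (equivalently, when a·S is an interval of consecutive residues). -/

import Mathlib

/-!
Since `a ≠ 0`, multiplication by `a` permutes `ℤ/p`, so `Ŝ(a) = ∑_{m ∈ aS} e(m/p)`. After a
rotation, `‖Ŝ(a)‖ = ∑_{m ∈ aS} cos (2π (m - c) / p)` for a suitable real centre `c`. This summand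
is at least `cos (π k / p)` on the arc of the `k = |S|` residues closest to `c` and at most that
value off it, so among all `k`-element sets the arc has the largest sum; that sum is the real part
of a rotated geometric sum, whose norm is `sin (π k / p) / sin (π / p)`. Multiplication by `a`
maps an arithmetic progression of difference `a⁻¹` onto an arc, which gives equality.
-/

open Finset

/-- Fourier transform of the indicator of `S ⊆ ℤ/p`:
`Ŝ(a) = ∑_{n ∈ S} e^{2πi a n / p}`. -/
noncomputable def ftSet (p : ℕ) (S : Finset (ZMod p)) (a : ZMod p) : ℂ :=
  ∑ n ∈ S, Complex.exp (2 * Real.pi * Complex.I * (a.val : ℂ) * (n.val : ℂ) / (p : ℂ))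

open Real Complex

theorem Finset.sum_le_sum_of_card_eq_of_le_of_le {ι M : Type*} [DecidableEq ι]
    [AddCommGroup M] [PartialOrder M] [IsOrderedAddMonoid M] {f : ι → M} {s t : Finset ι}
    {c : M} (hcard : #s = #t) (hout : ∀ i ∉ t, f i ≤ c) (hin : ∀ i ∈ t, c ≤ f i) :
    ∑ i ∈ s, f i ≤ ∑ i ∈ t, f i := by
  suffices ∑ i ∈ s, (f i - c) ≤ ∑ i ∈ t, (f i - c) by
    simpa only [sum_sub_distrib, sum_const, hcard, sub_le_sub_iff_right] using this
  calc ∑ i ∈ s, (f i - c)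
      = ∑ i ∈ s ∩ t, (f i - c) + ∑ i ∈ s \ t, (f i - c) := (sum_inter_add_sum_sdiff s t _).symm
    _ ≤ ∑ i ∈ s ∩ t, (f i - c) + 0 := by
        gcongr
        exact sum_nonpos fun i hi ↦ sub_nonpos.mpr (hout i (mem_sdiff.mp hi).2)
    _ ≤ ∑ i ∈ t, (f i - c) := by
        rw [add_zero]
        exact sum_le_sum_of_subset_of_nonneg inter_subset_right
          fun i hi _ ↦ sub_nonneg.mpr (hin i hi)

theorem Real.cos_le_cos_of_abs_le {α x : ℝ} (hα : α ≤ π) (h : |x| ≤ α) : cos α ≤ cos x := by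
  rw [← cos_abs x]
  exact cos_le_cos_of_nonneg_of_le_pi (abs_nonneg x) hα h

theorem Real.exists_abs_sub_int_mul_two_pi_lt_of_cos_lt {α x : ℝ} (hα : 0 ≤ α)
    (h : cos α < cos x) : ∃ j : ℤ, |x - j * (2 * π)| < α := by
  refine ⟨round (x / (2 * π)), lt_of_not_ge fun hle ↦ h.not_ge ?_⟩
  have hπ : |x - round (x / (2 * π)) * (2 * π)| ≤ π := by
    have := abs_sub_round (x / (2 * π))
    rw [show x - round (x / (2 * π)) * (2 * π) = (x / (2 * π) - round (x / (2 * π))) * (2 * π) by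
      field_simp, abs_mul, abs_of_pos two_pi_pos]
    nlinarith [pi_pos]
  calc cos x = cos |x - round (x / (2 * π)) * (2 * π)| := by
        rw [cos_abs, sub_eq_add_neg, ← neg_mul, ← Int.cast_neg, cos_add_int_mul_two_pi]
    _ ≤ cos α := cos_le_cos_of_nonneg_of_le_pi hα hπ hle

theorem Complex.norm_geom_sum_exp_mul_abs_sin (θ : ℝ) (k : ℕ) :
    ‖∑ j ∈ range k, exp (I * θ) ^ j‖ * |Real.sin (θ / 2)| = |Real.sin (k * θ / 2)| := by
  have h := congrArg norm (geom_sum_mul (exp (I * θ)) k)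
  rw [norm_mul, ← exp_nat_mul, show (k : ℂ) * (I * θ) = I * ((k * θ : ℝ) : ℂ) by push_cast; ring,
    norm_exp_I_mul_ofReal_sub_one, norm_exp_I_mul_ofReal_sub_one, norm_mul, norm_mul,
    mul_left_comm] at h
  simpa using h

namespace ZMod

variable {p : ℕ}

def arc (n₀ : ZMod p) (k : ℕ) : Finset (ZMod p) := (range k).image fun i : ℕ ↦ n₀ + i

theorem mem_arc {n₀ m : ZMod p} {k : ℕ} : m ∈ arc n₀ k ↔ ∃ i < k, n₀ + i = m := by
  simp [arc]

theorem injOn_add_natCast (n₀ : ZMod p) {k : ℕ} (hk : k ≤ p) :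
    Set.InjOn (fun i : ℕ ↦ n₀ + i) (range k) := by
  intro i hi j hj h
  have := (natCast_eq_natCast_iff' i j p).mp (add_left_cancel h)
  rwa [Nat.mod_eq_of_lt, Nat.mod_eq_of_lt] at this
  · exact (mem_range.mp hj).trans_le hk
  · exact (mem_range.mp hi).trans_le hk

theorem card_arc (n₀ : ZMod p) {k : ℕ} (hk : k ≤ p) : #(arc n₀ k) = k := by
  rw [arc, card_image_of_injOn (injOn_add_natCast n₀ hk), card_range]

variable [NeZero p]

theorem norm_sum_arc_stdAddChar (hp : 1 < p) (n₀ : ZMod p) {k : ℕ} (hk : k ≤ p) :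
    ‖∑ m ∈ arc n₀ k, stdAddChar m‖ = Real.sin (π * k / p) / Real.sin (π / p) := by
  have hp₀ : (0 : ℝ) < p := Nat.cast_pos.mpr (NeZero.pos p)
  have hsum : ∑ m ∈ arc n₀ k, stdAddChar m
      = stdAddChar n₀ * ∑ j ∈ range k, exp (I * ((2 * π / p : ℝ) : ℂ)) ^ j := by
    rw [arc, sum_image (injOn_add_natCast n₀ hk), mul_sum]
    refine sum_congr rfl fun j _ ↦ ?_
    rw [AddChar.map_add_eq_mul, ← nsmul_one, AddChar.map_nsmul_eq_pow, ← Int.cast_one,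
      stdAddChar_coe]
    push_cast
    ring_nf
  have hsin : 0 < Real.sin (π / p) := by
    apply sin_pos_of_pos_of_lt_pi (by positivity)
    rw [div_lt_iff₀ hp₀]
    nlinarith [pi_pos, (show (1 : ℝ) < p by exact_mod_cast hp)]
  have hsink : 0 ≤ Real.sin (π * k / p) := by
    apply sin_nonneg_of_nonneg_of_le_pi (by positivity)
    rw [div_le_iff₀ hp₀]
    nlinarith [pi_pos, (show (k : ℝ) ≤ p by exact_mod_cast hk)]
  have h := norm_geom_sum_exp_mul_abs_sin (2 * π / p) k
  rw [show 2 * π / p / 2 = π / p by ring, show k * (2 * π / p) / 2 = π * k / p by ring,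
    abs_of_pos hsin, abs_of_nonneg hsink] at h
  rw [hsum, norm_mul, stdAddChar_apply, Circle.norm_coe, one_mul]
  exact eq_div_of_mul_eq hsin.ne' h

noncomputable def rotatedCos (c : ℝ) (m : ZMod p) : ℝ :=
  (exp ((-(2 * π * c / p) : ℝ) * I) * stdAddChar m).re

theorem rotatedCos_intCast (c : ℝ) (z : ℤ) :
    rotatedCos c (z : ZMod p) = Real.cos (2 * π * (z - c) / p) := by
  rw [rotatedCos, stdAddChar_coe, ← Complex.exp_add, ← exp_ofReal_mul_I_re]
  congr 2
  push_cast
  ring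

/-- The `k` residues with an integer representative in `[c - k / 2, c + k / 2)`. -/
noncomputable def centredArc (c : ℝ) (k : ℕ) : Finset (ZMod p) := arc (⌈c - k / 2⌉ : ℤ) k

theorem cos_le_rotatedCos_of_mem_centredArc (c : ℝ) {k : ℕ} (hk : k ≤ p) {m : ZMod p}
    (hm : m ∈ centredArc c k) : Real.cos (π * k / p) ≤ rotatedCos c m := by
  obtain ⟨i, hi, rfl⟩ := mem_arc.mp hm
  have hp₀ : (0 : ℝ) < p := Nat.cast_pos.mpr (NeZero.pos p)
  have hi' : (i : ℝ) + 1 ≤ k := by exact_mod_cast hi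
  have hlo := Int.le_ceil (c - k / 2)
  have hhi := Int.ceil_lt_add_one (c - k / 2)
  have hdist : |(⌈c - k / 2⌉ + i : ℤ) - c| ≤ k / 2 := by
    push_cast
    rw [abs_le]
    constructor <;> linarith
  rw [show ((⌈c - k / 2⌉ : ℤ) : ZMod p) + i = ((⌈c - k / 2⌉ + i : ℤ) : ZMod p) by push_cast; rfl,
    rotatedCos_intCast]
  refine Real.cos_le_cos_of_abs_le ?_ ?_
  · rw [div_le_iff₀ hp₀]
    nlinarith [pi_pos, (show (k : ℝ) ≤ p by exact_mod_cast hk)]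
  · calc |2 * π * ((⌈c - k / 2⌉ + i : ℤ) - c) / p|
        = 2 * π / p * |(⌈c - k / 2⌉ + i : ℤ) - c| := by
          rw [mul_div_right_comm, abs_mul, abs_of_pos (div_pos two_pi_pos hp₀)]
      _ ≤ 2 * π / p * (k / 2) := by gcongr
      _ = π * k / p := by ring

theorem rotatedCos_le_cos_of_notMem_centredArc (c : ℝ) (k : ℕ) {m : ZMod p}
    (hm : m ∉ centredArc c k) : rotatedCos c m ≤ Real.cos (π * k / p) := by
  obtain ⟨z, rfl⟩ := intCast_surjective m
  rw [rotatedCos_intCast]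
  refine le_of_not_gt fun hlt ↦ hm ?_
  obtain ⟨j, hj⟩ := exists_abs_sub_int_mul_two_pi_lt_of_cos_lt (by positivity) hlt
  have hp₀ : (0 : ℝ) < p := Nat.cast_pos.mpr (NeZero.pos p)
  have hdist : |(z - j * p : ℤ) - c| < k / 2 := by
    rw [show 2 * π * (z - c) / p - j * (2 * π) = 2 * π / p * ((z - j * p : ℤ) - c) by
      push_cast; field_simp; ring, abs_mul, abs_of_pos (div_pos two_pi_pos hp₀),
      show π * k / p = 2 * π / p * (k / 2) by ring] at hj
    exact lt_of_mul_lt_mul_left hj (by positivity)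
  obtain ⟨hlo, hhi⟩ := abs_lt.mp hdist
  have hceil_le : ⌈c - k / 2⌉ ≤ z - j * p := Int.ceil_le.mpr (by linarith)
  have hceil_ge := Int.le_ceil (c - k / 2)
  obtain ⟨i, hi⟩ := Int.eq_ofNat_of_zero_le (sub_nonneg.mpr hceil_le)
  refine mem_arc.mpr ⟨i, ?_, ?_⟩
  · have hik : (i : ℝ) < k := by
      rw [← Int.cast_natCast, ← hi]
      push_cast at hhi ⊢
      linarith
    exact_mod_cast hik
  · rw [show z = ⌈c - k / 2⌉ + i + j * p by linarith]
    push_cast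
    simp

theorem norm_sum_stdAddChar_le (hp : 1 < p) (T : Finset (ZMod p)) :
    ‖∑ m ∈ T, stdAddChar m‖ ≤ Real.sin (π * #T / p) / Real.sin (π / p) := by
  set f := ∑ m ∈ T, stdAddChar m
  set c : ℝ := p * arg f / (2 * π)
  set u : ℂ := exp ((-(2 * π * c / p) : ℝ) * I)
  have hk : #T ≤ p := (card_le_univ T).trans (card p).le
  have hc : 2 * π * c / p = arg f := by
    have : (p : ℝ) ≠ 0 := (Nat.cast_pos.mpr (NeZero.pos p)).ne'
    simp only [c]
    field_simp
  have hu : (u * f).re = ‖f‖ := by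
    calc (u * f).re = (exp (-(arg f * I)) * (‖f‖ * exp (arg f * I))).re := by
          rw [norm_mul_exp_arg_mul_I f]
          simp only [u, hc]
          push_cast
          ring_nf
      _ = ‖f‖ := by
          rw [mul_left_comm, ← Complex.exp_add, neg_add_cancel, Complex.exp_zero, mul_one,
            ofReal_re]
  calc ‖f‖ = ∑ m ∈ T, rotatedCos c m := by rw [← hu, mul_sum, re_sum]; rfl
    _ ≤ ∑ m ∈ centredArc c #T, rotatedCos c m :=
        sum_le_sum_of_card_eq_of_le_of_le (card_arc _ hk).symm
          (fun _ ↦ rotatedCos_le_cos_of_notMem_centredArc c #T)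
          (fun _ ↦ cos_le_rotatedCos_of_mem_centredArc c hk)
    _ = (u * ∑ m ∈ centredArc c #T, stdAddChar m).re := by rw [mul_sum, re_sum]; rfl
    _ ≤ ‖u * ∑ m ∈ centredArc c #T, stdAddChar m‖ := re_le_norm _
    _ = Real.sin (π * #T / p) / Real.sin (π / p) := by
        rw [norm_mul, norm_exp_ofReal_mul_I, one_mul, centredArc, norm_sum_arc_stdAddChar hp _ hk]

end ZMod

open ZMod

theorem ftSet_eq_sum_stdAddChar {p : ℕ} [NeZero p] (S : Finset (ZMod p)) (a : ZMod p) :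
    ftSet p S a = ∑ n ∈ S, stdAddChar (a * n) := by
  refine sum_congr rfl fun n _ ↦ ?_
  have : a * n = ((a.val * n.val : ℕ) : ZMod p) := by push_cast; simp only [natCast_zmod_val]
  rw [this, stdAddChar_apply, toCircle_natCast]
  push_cast
  ring_nf

theorem fourier_coefficient_max_of_set_general (p : ℕ) (hp : p.Prime)
    (S : Finset (ZMod p))
    (a : ZMod p) (ha : a ≠ 0) :
    ‖ftSet p S a‖ ≤
      Real.sin (Real.pi * S.card / p) / Real.sin (Real.pi / p) ∧
    ((∃ s₀ : ZMod p, S = (Finset.range S.card).image (fun j : ℕ => s₀ + (j : ZMod p) * a⁻¹)) →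
      ‖ftSet p S a‖ =
        Real.sin (Real.pi * S.card / p) / Real.sin (Real.pi / p)) := by
  have : Fact p.Prime := ⟨hp⟩
  have hmul : Function.Injective (a * ·) := mul_right_injective₀ ha
  have hft : ftSet p S a = ∑ m ∈ S.image (a * ·), stdAddChar m := by
    rw [ftSet_eq_sum_stdAddChar, sum_image hmul.injOn]
  refine ⟨?_, fun ⟨s₀, hs₀⟩ ↦ ?_⟩
  · rw [hft, ← card_image_of_injective S hmul]
    exact norm_sum_stdAddChar_le hp.one_lt _
  · have harc : S.image (a * ·) = arc (a * s₀) #S := by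
      conv_lhs => rw [hs₀]
      rw [image_image, arc]
      congr 1
      ext j
      simp only [Function.comp_apply, mul_add, mul_left_comm a, mul_inv_cancel₀ ha, mul_one]
    rw [hft, harc, norm_sum_arc_stdAddChar hp.one_lt _ ((card_le_univ S).trans (card p).le)]

theorem fourier_coefficient_max_of_set (p : ℕ) (hp : p.Prime)
    (S : Finset (ZMod p)) (hS : S.Nonempty) (hcard : (S.card : ℝ) ≤ (p : ℝ) / 2)
    (a : ZMod p) (ha : a ≠ 0) :
    ‖ftSet p S a‖ ≤
      Real.sin (Real.pi * S.card / p) / Real.sin (Real.pi / p) ∧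
    ((∃ s₀ : ZMod p, S = (Finset.range S.card).image (fun j : ℕ => s₀ + (j : ZMod p) * a⁻¹)) →
      ‖ftSet p S a‖ =
        Real.sin (Real.pi * S.card / p) / Real.sin (Real.pi / p)) :=
  fourier_coefficient_max_of_set_general p hp S a ha
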